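/- In the presented group Gr⟨2,3,5⟩ = ⟨a, b, c ∣ a² = b³, b³ = c⁵, c⁵ = abc⟩, the image of the element a² lies in the center. -/

import Mathlib

/-- Relators of `Gr⟨2,3,5⟩ = ⟨a, b, c ∣ a² = b³, b³ = c⁵, c⁵ = abc⟩`,
with `a = 0`, `b = 1`, `c = 2`. -/
def relsGr235 : Set (FreeGroup (Fin 3)) :=
  {FreeGroup.of 0 ^ 2 * (FreeGroup.of 1 ^ 3)⁻¹,
   FreeGroup.of 1 ^ 3 * (FreeGroup.of 2 ^ 5)⁻¹,
   FreeGroup.of 2 ^ 5 * (FreeGroup.of 0 * FreeGroup.of 1 * FreeGroup.of 2)⁻¹}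

theorem PresentedGroup.of_pow_eq_of_pow {α : Type*} {rels : Set (FreeGroup α)} {i j : α}
    {m n : ℕ} (h : FreeGroup.of i ^ m * (FreeGroup.of j ^ n)⁻¹ ∈ rels) :
    (of i : PresentedGroup rels) ^ m = of j ^ n := by
  have := mk_eq_mk_of_mul_inv_mem h
  rwa [map_pow, map_pow] at this

theorem PresentedGroup.mem_center_of_forall_commute_of {α : Type*} {rels : Set (FreeGroup α)}
    {z : PresentedGroup rels} (h : ∀ i, Commute (of i) z) : z ∈ Subgroup.center _ := by
  rw [Subgroup.center_eq_iInf (closure_range_of rels)]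
  simpa [Subgroup.mem_centralizer_singleton_iff, Commute, SemiconjBy, eq_comm] using h

/-- In `Gr⟨2,3,5⟩`, the element `a²` is central. -/
theorem stmt_6 :
    (PresentedGroup.of 0 : PresentedGroup relsGr235) ^ 2 ∈
      Subgroup.center (PresentedGroup relsGr235) := by
  have hab : (PresentedGroup.of 0 : PresentedGroup relsGr235) ^ 2 = .of 1 ^ 3 :=
    PresentedGroup.of_pow_eq_of_pow (by simp [relsGr235])
  have hbc : (PresentedGroup.of 1 : PresentedGroup relsGr235) ^ 3 = .of 2 ^ 5 :=
    PresentedGroup.of_pow_eq_of_pow (by simp [relsGr235])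
  refine PresentedGroup.mem_center_of_forall_commute_of fun i ↦ ?_
  fin_cases i
  · exact (Commute.refl _).pow_right 2
  · exact hab ▸ (Commute.refl _).pow_right 3
  · exact hab ▸ hbc ▸ (Commute.refl _).pow_right 5
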